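/- arXiv:1310.5666 — 4 statements merged into one kernel-verified Lean document; each statement's English description precedes it below -/
import Mathlib

section
/- For a strictly positive probability p on the cell set I, define θ_j = Σ_{j' ◁ j or j'=0} (-1)^{|S(j)|-|S(j')|} log(p(j')/p(0)) for each cell j, where the sum runs over cells j' in J ∪ {0} below j. Then for every cell i ∈ I, log p(i) = log p(0) + Σ_{j ∈ J, j ◁ i} θ_j, provided log(p(i)/p(0)) lies in the linear span Ω_D (so that θ_i = 0 for i ∉ J). -/
attribute [local instance] Classical.propDecidable

/-- The support of a cell. -/
noncomputable def supp {V : Type*} [Fintype V] {I : V → Type*}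
    (z : ∀ v, I v) (i : ∀ v, I v) : Finset V :=
  Finset.univ.filter (fun v => i v ≠ z v)

/-- `tri z j i` is the relation `j ◁ i`.  Note `tri z z i` holds for all `i`,
so `{j' : tri z j' j}` is the set `{j' : j' ◁ j or j' = 0}`. -/
def tri {V : Type*} {I : V → Type*} (z : ∀ v, I v) (j i : ∀ v, I v) : Prop :=
  ∀ v, j v ≠ z v → j v = i v

/-!
Identify the cells below `i` with the subsets of its support. Then `θ` is the Möbius transform
of `f = log (p / p 0)` on the Boolean lattice, so summing `θ` over all cells below `i` gives
back `f i`. A cell `j ∉ J` contributes nothing: for each `d ∈ D` some coordinate `w` of the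
support of `j` lies outside `d`, so the alternating sum of `g d` over the subsets of the
support cancels in pairs `T`, `insert w T`.
-/

open Finset

namespace Loglinear

section Powerset

variable {α R : Type*} [CommRing R]

def powersetMobius (F : Finset α → R) (S : Finset α) : R :=
  ∑ T ∈ S.powerset, (-1) ^ (S.card - T.card) * F T

lemma powersetMobius_empty (F : Finset α → R) : powersetMobius F ∅ = F ∅ := by
  simp [powersetMobius]

lemma powersetMobius_congr {F G : Finset α → R} {S : Finset α}
    (h : ∀ T ⊆ S, F T = G T) : powersetMobius F S = powersetMobius G S :=
  sum_congr rfl fun T hT => by rw [h T (mem_powerset.1 hT)]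

variable [DecidableEq α]

lemma powersetMobius_insert (F : Finset α → R) {a : α} {S : Finset α} (ha : a ∉ S) :
    powersetMobius F (insert a S) = powersetMobius (F ∘ insert a) S - powersetMobius F S := by
  unfold powersetMobius
  rw [sum_powerset_insert ha, card_insert_of_notMem ha, add_comm, sub_eq_add_neg,
    ← sum_neg_distrib]
  congr 1
  · refine sum_congr rfl fun T hT => ?_
    have haT : a ∉ T := fun h => ha (mem_powerset.1 hT h)
    rw [card_insert_of_notMem haT, Nat.add_sub_add_right, Function.comp_apply]
  · refine sum_congr rfl fun T hT => ?_
    rw [Nat.sub_add_comm (card_le_card (mem_powerset.1 hT)), pow_succ]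
    ring

lemma sum_powerset_powersetMobius (F : Finset α → R) (S : Finset α) :
    ∑ T ∈ S.powerset, powersetMobius F T = F S := by
  induction S using Finset.induction_on generalizing F with
  | empty => simp [powersetMobius_empty]
  | insert a S ha ih =>
    have hinsert : ∀ T ∈ S.powerset,
        powersetMobius F (insert a T) = powersetMobius (F ∘ insert a) T - powersetMobius F T :=
      fun T hT => powersetMobius_insert F fun h => ha (mem_powerset.1 hT h)
    rw [sum_powerset_insert ha, sum_congr rfl hinsert, sum_sub_distrib, ih, ih]
    simp

lemma powersetMobius_eq_zero_of_insert_eq {F : Finset α → R} {S : Finset α} {w : α}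
    (hw : w ∈ S) (hF : ∀ T, F (insert w T) = F T) : powersetMobius F S = 0 := by
  have hFw : F ∘ insert w = F := funext hF
  rw [← insert_erase hw, powersetMobius_insert F (notMem_erase w S), hFw, sub_self]

end Powerset

section Cells

variable {V : Type*} {I : V → Type*} (z : ∀ v, I v)

def restrict [DecidableEq V] (i : ∀ v, I v) (T : Finset V) : ∀ v, I v :=
  fun v => if v ∈ T then i v else z v

lemma restrict_empty [DecidableEq V] (i : ∀ v, I v) : restrict z i ∅ = z := by
  funext v
  simp [restrict]

lemma restrict_restrict [DecidableEq V] (i : ∀ v, I v) {T T' : Finset V} (h : T' ⊆ T) :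
    restrict z (restrict z i T) T' = restrict z i T' := by
  funext v
  by_cases hv : v ∈ T'
  · simp [restrict, hv, h hv]
  · simp [restrict, hv]

lemma tri_restrict [DecidableEq V] (i : ∀ v, I v) (T : Finset V) : tri z (restrict z i T) i := by
  intro v hv
  by_cases h : v ∈ T
  · simp [restrict, h]
  · simp [restrict, h] at hv

lemma mem_supp [Fintype V] {i : ∀ v, I v} {v : V} : v ∈ supp z i ↔ i v ≠ z v := by
  simp [supp]

lemma supp_subset_of_tri [Fintype V] {j i : ∀ v, I v} (h : tri z j i) : supp z j ⊆ supp z i := by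
  intro v hv
  rw [mem_supp] at hv ⊢
  rwa [← h v hv]

variable [Fintype V] [DecidableEq V]

lemma supp_restrict {i : ∀ v, I v} {T : Finset V} (hT : T ⊆ supp z i) :
    supp z (restrict z i T) = T := by
  ext v
  by_cases h : v ∈ T
  · simpa [mem_supp, restrict, h] using (mem_supp z).1 (hT h)
  · simp [mem_supp, restrict, h]

lemma restrict_supp {j i : ∀ v, I v} (h : tri z j i) : restrict z i (supp z j) = j := by
  funext v
  by_cases hv : j v = z v
  · simp [restrict, mem_supp, hv]
  · simp [restrict, mem_supp, hv, (h v hv).symm]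

lemma restrict_supp_self (i : ∀ v, I v) : restrict z i (supp z i) = i :=
  restrict_supp z fun _ _ => rfl

variable [∀ v, Fintype (I v)]

lemma sum_tri_eq_sum_powerset {M : Type*} [AddCommMonoid M] (i : ∀ v, I v)
    (G : (∀ v, I v) → M) :
    ∑ j ∈ univ.filter (fun j => tri z j i), G j
      = ∑ T ∈ (supp z i).powerset, G (restrict z i T) := by
  refine sum_nbij' (fun j => supp z j) (fun T => restrict z i T) ?_ ?_ ?_ ?_ ?_
  · intro j hj
    exact mem_powerset.2 (supp_subset_of_tri z (mem_filter.1 hj).2)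
  · intro T _
    exact mem_filter.2 ⟨mem_univ _, tri_restrict z i T⟩
  · intro j hj
    exact restrict_supp z (mem_filter.1 hj).2
  · intro T hT
    exact supp_restrict z (mem_powerset.1 hT)
  · intro j hj
    rw [restrict_supp z (mem_filter.1 hj).2]

variable {R : Type*} [CommRing R]

/-- The paper's `θ` is `cellMobius z (fun j => log (p j / p z))`. -/
noncomputable def cellMobius (f : (∀ v, I v) → R) (j : ∀ v, I v) : R :=
  ∑ j' ∈ univ.filter (fun j' => tri z j' j), (-1) ^ ((supp z j).card - (supp z j').card) * f j'

lemma cellMobius_eq_powersetMobius (f : (∀ v, I v) → R) (j : ∀ v, I v) :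
    cellMobius z f j = powersetMobius (fun T => f (restrict z j T)) (supp z j) := by
  rw [cellMobius, sum_tri_eq_sum_powerset z j
    (fun j' => (-1) ^ ((supp z j).card - (supp z j').card) * f j')]
  exact sum_congr rfl fun T hT => by rw [supp_restrict z (mem_powerset.1 hT)]

lemma cellMobius_sum {ι : Type*} (s : Finset ι) (g : ι → (∀ v, I v) → R) (j : ∀ v, I v) :
    cellMobius z (fun i => ∑ d ∈ s, g d i) j = ∑ d ∈ s, cellMobius z (g d) j := by
  simp only [cellMobius, mul_sum]
  exact sum_comm

lemma sum_tri_cellMobius (f : (∀ v, I v) → R) (i : ∀ v, I v) :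
    ∑ j ∈ univ.filter (fun j => tri z j i), cellMobius z f j = f i := by
  have hrestrict : ∀ T ∈ (supp z i).powerset, cellMobius z f (restrict z i T)
      = powersetMobius (fun T' => f (restrict z i T')) T := by
    intro T hT
    rw [cellMobius_eq_powersetMobius, supp_restrict z (mem_powerset.1 hT)]
    exact powersetMobius_congr fun T' hT' => by rw [restrict_restrict z i hT']
  rw [sum_tri_eq_sum_powerset, sum_congr rfl hrestrict, sum_powerset_powersetMobius,
    restrict_supp_self]

lemma cellMobius_eq_zero_of_not_subset {g : (∀ v, I v) → R} {d : Finset V}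
    (hg : ∀ i i' : ∀ v, I v, (∀ v ∈ d, i v = i' v) → g i = g i')
    {j : ∀ v, I v} (hj : ¬ supp z j ⊆ d) : cellMobius z g j = 0 := by
  obtain ⟨w, hwj, hwd⟩ := not_subset.1 hj
  rw [cellMobius_eq_powersetMobius]
  refine powersetMobius_eq_zero_of_insert_eq hwj fun T => hg _ _ fun v hv => ?_
  have hvw : v ≠ w := fun h => hwd (h ▸ hv)
  simp [restrict, hvw]

lemma cellMobius_eq_zero_of_supp_notMem {D : Finset (Finset V)}
    (hdown : ∀ d ∈ D, ∀ d' : Finset V, d' ⊆ d → d' ≠ ∅ → d' ∈ D)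
    {f : (∀ v, I v) → R} (hfz : f z = 0) (g : Finset V → (∀ v, I v) → R)
    (hg : ∀ d ∈ D, ∀ i i' : ∀ v, I v, (∀ v ∈ d, i v = i' v) → g d i = g d i')
    (hf : ∀ i, f i = ∑ d ∈ D, g d i) {j : ∀ v, I v} (hj : supp z j ∉ D) :
    cellMobius z f j = 0 := by
  by_cases hempty : supp z j = ∅
  · rw [cellMobius_eq_powersetMobius, hempty, powersetMobius_empty, restrict_empty, hfz]
  · rw [show f = fun i => ∑ d ∈ D, g d i from funext hf, cellMobius_sum]
    exact sum_eq_zero fun d hd =>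
      cellMobius_eq_zero_of_not_subset z (hg d hd) fun h => hj (hdown d hd _ h hempty)

end Cells

end Loglinear

open Loglinear in
theorem stmt3_general {V : Type*} [Fintype V] [DecidableEq V]
    {I : V → Type*} [∀ v, Fintype (I v)]
    (z : ∀ v, I v)
    (D : Finset (Finset V))
    (hdown : ∀ d ∈ D, ∀ d' : Finset V, d' ⊆ d → d' ≠ ∅ → d' ∈ D)
    (p : (∀ v, I v) → ℝ) (hp : ∀ i, 0 < p i)
    -- log (p(i)/p(0)) belongs to the linear span Ω_D
    (hΩ : ∃ g : Finset V → (∀ v, I v) → ℝ,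
      (∀ d ∈ D, ∀ i i' : ∀ v, I v, (∀ v ∈ d, i v = i' v) → g d i = g d i') ∧
      ∀ i, Real.log (p i / p z) = ∑ d ∈ D, g d i)
    (θ : (∀ v, I v) → ℝ)
    (hθ : ∀ j, θ j = ∑ j' ∈ Finset.univ.filter (fun j' => tri z j' j),
      (-1 : ℝ) ^ ((supp z j).card - (supp z j').card) * Real.log (p j' / p z)) :
    ∀ i, Real.log (p i) = Real.log (p z) +
      ∑ j ∈ Finset.univ.filter (fun j => supp z j ∈ D ∧ tri z j i), θ j := by
  intro i
  obtain ⟨g, hg, hlog⟩ := hΩ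
  set f : (∀ v, I v) → ℝ := fun i => Real.log (p i / p z)
  have hθf : θ = cellMobius z f := funext hθ
  have hfz : f z = 0 := by simp [f]
  have hJ : ∑ j ∈ univ.filter (fun j => supp z j ∈ D ∧ tri z j i), θ j
      = ∑ j ∈ univ.filter (fun j => tri z j i), θ j := by
    refine sum_subset (fun j hj => ?_) fun j hj hjJ => ?_
    · simp only [mem_filter] at hj ⊢
      exact ⟨hj.1, hj.2.2⟩
    · simp only [mem_filter, not_and] at hj hjJ
      rw [hθf]
      exact cellMobius_eq_zero_of_supp_notMem z hdown hfz g hg hlog fun h => hjJ hj.1 h hj.2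
  rw [hJ, hθf, sum_tri_cellMobius]
  simp only [f]
  rw [Real.log_div (hp i).ne' (hp z).ne']
  ring

/-- Loglinear expansion: if `log (p/p(0))` lies in `Ω_D` and `θ_j` is defined by
Möbius inversion, then `log p(i) = log p(0) + ∑_{j ∈ J, j ◁ i} θ_j`. -/
theorem stmt3 {V : Type*} [Fintype V] [DecidableEq V]
    {I : V → Type*} [∀ v, Fintype (I v)] [∀ v, DecidableEq (I v)]
    (z : ∀ v, I v)
    (D : Finset (Finset V))
    (hdown : ∀ d ∈ D, ∀ d' : Finset V, d' ⊆ d → d' ≠ ∅ → d' ∈ D)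
    (hne : ∀ d ∈ D, d ≠ ∅)
    (hcover : D.biUnion id = Finset.univ)
    (p : (∀ v, I v) → ℝ) (hp : ∀ i, 0 < p i)
    -- log (p(i)/p(0)) belongs to the linear span Ω_D
    (hΩ : ∃ g : Finset V → (∀ v, I v) → ℝ,
      (∀ d ∈ D, ∀ i i' : ∀ v, I v, (∀ v ∈ d, i v = i' v) → g d i = g d i') ∧
      ∀ i, Real.log (p i / p z) = ∑ d ∈ D, g d i)
    (θ : (∀ v, I v) → ℝ)
    (hθ : ∀ j, θ j = ∑ j' ∈ Finset.univ.filter (fun j' => tri z j' j),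
      (-1 : ℝ) ^ ((supp z j).card - (supp z j').card) * Real.log (p j' / p z)) :
    ∀ i, Real.log (p i) = Real.log (p z) +
      ∑ j ∈ Finset.univ.filter (fun j => supp z j ∈ D ∧ tri z j i), θ j :=
  stmt3_general z D hdown p hp hΩ θ hθ
end

section
/- Invariance of non-buffer parameters under marginalization: let X be Markov with respect to a graph G = (V,E), M ⊆ V, and define the buffer B = {w ∈ M : ∃ w' ∉ M with (w,w') ∈ E}. If j is a cell with S(j) ⊆ M and S(j) ⊄ B, then the marginal log-linear parameter θ^M_j of the M-marginal distribution equals the joint parameter θ_j. In particular, if θ_j = 0 and S(j) ⊄ B then θ^M_j = 0. -/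
attribute [local instance] Classical.propDecidable

/-! Summing out the coordinates outside `M` factorizes the marginal as
`p^M(m) ∝ exp (Σ θ_k over the cliques k ◁ m inside M) · W(m)`, and `W(m)` sees `m` only through
the buffer, since a clique that leaves `M` meets `M` inside the buffer. In the Möbius inversion
over the subsets of `S(j)`, the first factor returns `θ_j`, while `log W` cancels in pairs
`T, T ∪ {u}` for a point `u ∈ S(j)` outside the buffer. -/

open Finset

section Mobius

variable {α : Type*}

noncomputable def mobiusSum (S : Finset α) (g : Finset α → ℝ) : ℝ :=
  ∑ T ∈ S.powerset, (-1) ^ (S.card - T.card) * g T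

lemma mobiusSum_congr {S : Finset α} {f g : Finset α → ℝ} (h : ∀ T ⊆ S, f T = g T) :
    mobiusSum S f = mobiusSum S g :=
  sum_congr rfl fun T hT => by rw [h T (mem_powerset.1 hT)]

lemma mobiusSum_add (S : Finset α) (f g : Finset α → ℝ) :
    mobiusSum S (fun T => f T + g T) = mobiusSum S f + mobiusSum S g := by
  simp only [mobiusSum, mul_add, sum_add_distrib]

lemma mobiusSum_sum {ι : Type*} (S : Finset α) (C : Finset ι) (f : ι → Finset α → ℝ) :
    mobiusSum S (fun T => ∑ k ∈ C, f k T) = ∑ k ∈ C, mobiusSum S (f k) := by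
  simp only [mobiusSum, mul_sum]
  exact sum_comm

lemma mobiusSum_eq_zero_of_insert [DecidableEq α] {S : Finset α} {g : Finset α → ℝ} {u : α}
    (hu : u ∈ S) (hg : ∀ T ⊆ S.erase u, g (insert u T) = g T) : mobiusSum S g = 0 := by
  have hu' : u ∉ S.erase u := notMem_erase u S
  rw [mobiusSum, ← insert_erase hu, sum_powerset_insert hu', card_insert_of_notMem hu',
    ← sum_add_distrib]
  refine sum_eq_zero fun T hT => ?_
  rw [mem_powerset] at hT
  rw [card_insert_of_notMem fun h => hu' (hT h), hg T hT, Nat.add_sub_add_right,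
    Nat.succ_sub (card_le_card hT), pow_succ]
  ring

lemma mobiusSum_ite_subset [DecidableEq α] {S A : Finset α} (hA : A ⊆ S) (c : ℝ) :
    mobiusSum S (fun T => if A ⊆ T then c else 0) = if A = S then c else 0 := by
  split_ifs with hAS
  · subst hAS
    rw [mobiusSum, sum_eq_single_of_mem A (mem_powerset_self A)]
    · simp
    · intro T hT hTA
      rw [if_neg fun h => hTA (subset_antisymm (mem_powerset.1 hT) h), mul_zero]
  · obtain ⟨u, huS, huA⟩ := not_subset.1 fun h => hAS (subset_antisymm hA h)
    exact mobiusSum_eq_zero_of_insert huS fun T _ => by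
      simp only [subset_insert_iff_of_notMem huA]

end Mobius

section Cells

variable {V : Type*} {I : V → Type*} {z i j k : ∀ v, I v}

lemma tri_refl (z j : ∀ v, I v) : tri z j j := fun _ _ => rfl

lemma piecewise_tri {T : Finset V} [∀ v, Decidable (v ∈ T)] : tri z (T.piecewise j z) j :=
  fun v hv => by
    by_cases hvT : v ∈ T
    · rw [piecewise_eq_of_mem _ _ _ hvT]
    · rw [piecewise_eq_of_notMem _ _ _ hvT] at hv
      exact absurd rfl hv

variable [Fintype V]

lemma mem_supp {v : V} : v ∈ supp z i ↔ i v ≠ z v := by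
  simp [supp]

lemma supp_subset_of_tri (h : tri z k j) : supp z k ⊆ supp z j := fun v hv => by
  rw [mem_supp] at hv ⊢
  rwa [← h v hv]

lemma tri_congr (h : ∀ v ∈ supp z k, i v = j v) : tri z k i ↔ tri z k j :=
  forall_congr' fun v => imp_congr_right fun hv => by rw [h v (mem_supp.2 hv)]

variable [DecidableEq V] {T : Finset V}

lemma supp_piecewise (hT : T ⊆ supp z j) : supp z (T.piecewise j z) = T := by
  ext v
  by_cases hv : v ∈ T
  · simpa [mem_supp, hv] using mem_supp.1 (hT hv)
  · simp [mem_supp, hv]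

lemma piecewise_supp_of_tri (h : tri z k j) : (supp z k).piecewise j z = k := by
  funext v
  by_cases hv : v ∈ supp z k
  · rw [piecewise_eq_of_mem _ _ _ hv, h v (mem_supp.1 hv)]
  · rw [piecewise_eq_of_notMem _ _ _ hv]
    exact (not_not.1 (mt mem_supp.2 hv)).symm

lemma eq_of_tri_of_supp_eq (h : tri z k j) (hkj : supp z k = supp z j) : k = j :=
  calc k = (supp z k).piecewise j z := (piecewise_supp_of_tri h).symm
    _ = (supp z j).piecewise j z := by rw [hkj]
    _ = j := piecewise_supp_of_tri (tri_refl z j)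

lemma tri_piecewise_iff : tri z k (T.piecewise j z) ↔ tri z k j ∧ supp z k ⊆ T := by
  refine ⟨fun h => ?_, fun ⟨h, hT⟩ v hv => ?_⟩
  · have hT : supp z k ⊆ T := fun v hv => by
      by_contra hvT
      have := h v (mem_supp.1 hv)
      rw [piecewise_eq_of_notMem _ _ _ hvT] at this
      exact mem_supp.1 hv this
    refine ⟨fun v hv => ?_, hT⟩
    rw [h v hv, piecewise_eq_of_mem _ _ _ (hT (mem_supp.2 hv))]
  · rw [piecewise_eq_of_mem _ _ _ (hT (mem_supp.2 hv)), h v hv]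

lemma sum_tri_eq_mobiusSum [∀ v, Fintype (I v)] {M : Finset V} (hjM : supp z j ⊆ M)
    (F : (∀ v, I v) → ℝ) :
    ∑ j' ∈ univ.filter (fun j' => tri z j' j ∧ supp z j' ⊆ M),
        (-1 : ℝ) ^ ((supp z j).card - (supp z j').card) * F j'
      = mobiusSum (supp z j) (fun T => F (T.piecewise j z)) := by
  refine sum_nbij' (fun j' => supp z j') (fun T => T.piecewise j z) ?_ ?_ ?_ ?_ ?_
  · intro j' hj'
    exact mem_powerset.2 (supp_subset_of_tri (mem_filter.1 hj').2.1)
  · intro T hT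
    have hT := mem_powerset.1 hT
    exact mem_filter.2 ⟨mem_univ _, piecewise_tri, (supp_piecewise hT).trans_subset (hT.trans hjM)⟩
  · intro j' hj'
    exact piecewise_supp_of_tri (mem_filter.1 hj').2.1
  · intro T hT
    exact supp_piecewise (mem_powerset.1 hT)
  · intro j' hj'
    dsimp only
    rw [piecewise_supp_of_tri (mem_filter.1 hj').2.1]

end Cells

noncomputable def buffer {V : Type*} [Fintype V] [DecidableEq V] (G : SimpleGraph V)
    (M : Finset V) : Finset V :=
  M.filter (fun w => ∃ w' ∉ M, G.Adj w w')

lemma SimpleGraph.IsClique.mem_buffer {V : Type*} [Fintype V] [DecidableEq V]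
    {G : SimpleGraph V} {s M : Finset V} (hs : G.IsClique (s : Set V)) (hsM : ¬ s ⊆ M) {v : V}
    (hv : v ∈ s) (hvM : v ∈ M) :
    v ∈ buffer G M := by
  obtain ⟨w, hw, hwM⟩ := not_subset.1 hsM
  exact mem_filter.2 ⟨hvM, w, hwM, hs hv hw fun h => hwM (h ▸ hvM)⟩

section Energy

variable {V : Type*} [Fintype V] [DecidableEq V] {I : V → Type*} [∀ v, Fintype (I v)]
  (z : ∀ v, I v) (G : SimpleGraph V) (θ : (∀ v, I v) → ℝ) (M : Finset V)

noncomputable def energy (i : ∀ v, I v) : ℝ :=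
  ∑ k ∈ univ.filter (fun k => G.IsClique (supp z k : Set V) ∧ tri z k i), θ k

noncomputable def innerEnergy (i : ∀ v, I v) : ℝ :=
  ∑ k ∈ univ.filter (fun k => (G.IsClique (supp z k : Set V) ∧ tri z k i) ∧ supp z k ⊆ M), θ k

noncomputable def outerEnergy (i : ∀ v, I v) : ℝ :=
  ∑ k ∈ univ.filter (fun k => (G.IsClique (supp z k : Set V) ∧ tri z k i) ∧ ¬ supp z k ⊆ M), θ k

lemma energy_eq_innerEnergy_add_outerEnergy (i : ∀ v, I v) :
    energy z G θ i = innerEnergy z G θ M i + outerEnergy z G θ M i := by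
  rw [energy, innerEnergy, outerEnergy, ← sum_filter_add_sum_filter_not _ (fun k => supp z k ⊆ M),
    filter_filter, filter_filter]

variable {z G θ M}

lemma innerEnergy_congr {i m : ∀ v, I v} (h : ∀ v ∈ M, i v = m v) :
    innerEnergy z G θ M i = innerEnergy z G θ M m :=
  sum_congr (filter_congr fun _ _ =>
    and_congr_left fun hM => and_congr_right' (tri_congr fun v hv => h v (hM hv))) fun _ _ => rfl

lemma outerEnergy_congr {i i' : ∀ v, I v} (h : ∀ v, (v ∈ M → v ∈ buffer G M) → i v = i' v) :
    outerEnergy z G θ M i = outerEnergy z G θ M i' :=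
  sum_congr (filter_congr fun _ _ => and_congr_left fun hM => and_congr_right fun hC =>
    tri_congr fun v hv => h v (hC.mem_buffer hM hv)) fun _ _ => rfl

lemma innerEnergy_piecewise {j : ∀ v, I v} {T : Finset V} (hT : T ⊆ M) :
    innerEnergy z G θ M (T.piecewise j z) =
      ∑ k ∈ univ.filter (fun k => G.IsClique (supp z k : Set V) ∧ tri z k j),
        if supp z k ⊆ T then θ k else 0 := by
  rw [innerEnergy, ← sum_filter, filter_filter]
  refine sum_congr (filter_congr fun k _ => ?_) fun _ _ => rfl
  rw [tri_piecewise_iff]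
  exact ⟨fun ⟨⟨hC, ht, hkT⟩, _⟩ => ⟨⟨hC, ht⟩, hkT⟩,
    fun ⟨⟨hC, ht⟩, hkT⟩ => ⟨⟨hC, ht, hkT⟩, hkT.trans hT⟩⟩

lemma mobiusSum_innerEnergy_piecewise (hθ : ∀ k, ¬ G.IsClique (supp z k : Set V) → θ k = 0)
    {j : ∀ v, I v} (hjM : supp z j ⊆ M) :
    mobiusSum (supp z j) (fun T => innerEnergy z G θ M (T.piecewise j z)) = θ j := by
  rw [mobiusSum_congr fun T hT => innerEnergy_piecewise (hT.trans hjM), mobiusSum_sum,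
    sum_congr rfl fun k hk => mobiusSum_ite_subset (supp_subset_of_tri (mem_filter.1 hk).2.2) (θ k),
    sum_eq_single j]
  · exact if_pos rfl
  · exact fun k hk hkj => if_neg fun h => hkj (eq_of_tri_of_supp_eq (mem_filter.1 hk).2.2 h)
  · exact fun hj => (if_pos rfl).trans
      (hθ j fun hC => hj (mem_filter.2 ⟨mem_univ j, hC, tri_refl z j⟩))

end Energy

section Marginal

variable {V : Type*} [Fintype V] [DecidableEq V] {I : V → Type*} [∀ v, Fintype (I v)]
  [∀ v, DecidableEq (I v)] (z : ∀ v, I v) (G : SimpleGraph V) (θ : (∀ v, I v) → ℝ) (M : Finset V)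

noncomputable def outerWeight (m : ∀ v, I v) : ℝ :=
  ∑ i ∈ univ.filter (fun i => ∀ v ∈ M, i v = m v), Real.exp (outerEnergy z G θ M i)

variable {z G θ M}

lemma outerWeight_pos (m : ∀ v, I v) : 0 < outerWeight z G θ M m :=
  sum_pos (fun _ _ => Real.exp_pos _) ⟨m, mem_filter.2 ⟨mem_univ m, fun _ _ => rfl⟩⟩

/-- Overwriting the `M`-coordinates matches the fibres over `m` and `m'`; this keeps
`outerEnergy` because a clique leaving `M` meets `M` only inside the buffer. -/
lemma outerWeight_congr {m m' : ∀ v, I v} (h : ∀ v ∈ buffer G M, m v = m' v) :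
    outerWeight z G θ M m = outerWeight z G θ M m' := by
  have hfib : ∀ {m i : ∀ v, I v}, (∀ v ∈ M, i v = m v) → M.piecewise m i = i := fun hi =>
    (piecewise_congr (s := M) (fun v hv => (hi v hv).symm) fun _ _ => rfl).trans
      (piecewise_same _ _)
  refine sum_nbij' (fun i => M.piecewise m' i) (fun i => M.piecewise m i) ?_ ?_ ?_ ?_ ?_
  · exact fun i _ => mem_filter.2 ⟨mem_univ _, fun v hv => piecewise_eq_of_mem _ _ _ hv⟩
  · exact fun i _ => mem_filter.2 ⟨mem_univ _, fun v hv => piecewise_eq_of_mem _ _ _ hv⟩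
  · exact fun i hi => by rw [piecewise_idem_right, hfib (mem_filter.1 hi).2]
  · exact fun i hi => by rw [piecewise_idem_right, hfib (mem_filter.1 hi).2]
  · refine fun i hi => congrArg Real.exp (outerEnergy_congr fun v hv => ?_)
    by_cases hvM : v ∈ M
    · rw [piecewise_eq_of_mem _ _ _ hvM, (mem_filter.1 hi).2 v hvM, h v (hv hvM)]
    · rw [piecewise_eq_of_notMem _ _ _ hvM]

lemma marginal_eq_exp_innerEnergy_mul_outerWeight {p pM : (∀ v, I v) → ℝ}
    (hp : ∀ i, p i = Real.exp (energy z G θ i) / ∑ i', Real.exp (energy z G θ i'))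
    (hpM : ∀ m, pM m = ∑ i ∈ univ.filter (fun i => ∀ v ∈ M, i v = m v), p i)
    (m : ∀ v, I v) :
    pM m = Real.exp (innerEnergy z G θ M m) * outerWeight z G θ M m /
      ∑ i', Real.exp (energy z G θ i') := by
  rw [hpM, outerWeight, mul_sum, sum_div]
  refine sum_congr rfl fun i hi => ?_
  rw [hp, energy_eq_innerEnergy_add_outerEnergy z G θ M, innerEnergy_congr (mem_filter.1 hi).2,
    Real.exp_add]

lemma log_marginal_div {p pM : (∀ v, I v) → ℝ}
    (hp : ∀ i, p i = Real.exp (energy z G θ i) / ∑ i', Real.exp (energy z G θ i'))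
    (hpM : ∀ m, pM m = ∑ i ∈ univ.filter (fun i => ∀ v ∈ M, i v = m v), p i)
    (m m' : ∀ v, I v) :
    Real.log (pM m / pM m') = innerEnergy z G θ M m +
      (Real.log (outerWeight z G θ M m) -
        (innerEnergy z G θ M m' + Real.log (outerWeight z G θ M m'))) := by
  have hZ : 0 < ∑ i', Real.exp (energy z G θ i') :=
    sum_pos (fun _ _ => Real.exp_pos _) ⟨z, mem_univ z⟩
  have hpos : ∀ m, 0 < pM m := fun m => by
    rw [marginal_eq_exp_innerEnergy_mul_outerWeight hp hpM]
    exact div_pos (mul_pos (Real.exp_pos _) (outerWeight_pos m)) hZ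
  have hlog : ∀ m, Real.log (pM m) = innerEnergy z G θ M m +
      Real.log (outerWeight z G θ M m) - Real.log (∑ i', Real.exp (energy z G θ i')) := fun m => by
    rw [marginal_eq_exp_innerEnergy_mul_outerWeight hp hpM,
      Real.log_div (mul_pos (Real.exp_pos _) (outerWeight_pos m)).ne' hZ.ne',
      Real.log_mul (Real.exp_pos _).ne' (outerWeight_pos m).ne', Real.log_exp]
  rw [Real.log_div (hpos m).ne' (hpos m').ne', hlog, hlog]
  ring

end Marginal

/-- Invariance of non-buffer parameters under marginalization (Lemma 2 of the paper):
for a discrete graphical model Markov w.r.t. `G`, if `S(j) ⊆ M` and `S(j) ⊄ B`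
where `B` is the buffer of `M`, then the marginal parameter `θ^M_j` equals `θ_j`.
In particular `θ_j = 0` implies `θ^M_j = 0` for such `j`. -/
theorem stmt6 {V : Type*} [Fintype V] [DecidableEq V]
    {I : V → Type*} [∀ v, Fintype (I v)] [∀ v, DecidableEq (I v)]
    (z : ∀ v, I v)
    (G : SimpleGraph V)
    -- the joint loglinear parameters, supported on the cliques of G
    (θ : (∀ v, I v) → ℝ)
    (hθ : ∀ j, ¬ G.IsClique (↑(supp z j) : Set V) → θ j = 0)
    -- the joint probabilities
    (p : (∀ v, I v) → ℝ)
    (hp : ∀ i, p i =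
      Real.exp (∑ j ∈ Finset.univ.filter
          (fun j => G.IsClique (↑(supp z j) : Set V) ∧ tri z j i), θ j) /
        ∑ i' : ∀ v, I v, Real.exp (∑ j ∈ Finset.univ.filter
          (fun j => G.IsClique (↑(supp z j) : Set V) ∧ tri z j i'), θ j))
    (M : Finset V)
    -- the M-marginal probabilities
    (pM : (∀ v, I v) → ℝ)
    (hpM : ∀ m, pM m = ∑ i ∈ Finset.univ.filter (fun i => ∀ v ∈ M, i v = m v), p i)
    -- the M-marginal loglinear parameters, defined by Möbius inversion
    (θM : (∀ v, I v) → ℝ)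
    (hθM : ∀ j, θM j =
      ∑ j' ∈ Finset.univ.filter (fun j' => tri z j' j ∧ supp z j' ⊆ M),
        (-1 : ℝ) ^ ((supp z j).card - (supp z j').card) * Real.log (pM j' / pM z))
    -- the buffer set of M
    (B : Finset V) (hB : B = M.filter (fun w => ∃ w' ∉ M, G.Adj w w'))
    -- a cell supported in M but not in the buffer
    (j : ∀ v, I v) (hjM : supp z j ⊆ M) (hjB : ¬ supp z j ⊆ B) :
    θM j = θ j := by
  obtain ⟨u, hu, huB⟩ := not_subset.1 (by rwa [hB] at hjB : ¬ supp z j ⊆ buffer G M)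
  have hlog := log_marginal_div (z := z) (G := G) (θ := θ) (M := M) hp hpM
  rw [hθM, sum_tri_eq_mobiusSum hjM]
  simp only [hlog]
  rw [mobiusSum_add, mobiusSum_innerEnergy_piecewise hθ hjM, add_eq_left]
  refine mobiusSum_eq_zero_of_insert hu fun T _ => ?_
  rw [outerWeight_congr fun v hv => piecewise_insert_of_ne _ _ _ (ne_of_mem_of_not_mem hv huB)]
end

section
/- Monotonicity of principal blocks of inverses: let K be a symmetric positive definite real matrix indexed by a finite set partitioned as A ∪ B ∪ C. Then the A-block of K⁻¹ satisfies [K⁻¹]_{AA} ⪰ [(K_{(A∪B)(A∪B)})⁻¹]_{AA} in the Loewner order, where K_{(A∪B)(A∪B)} is the principal submatrix of K on A ∪ B. -/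
/-!
Write `K` in blocks over `(A ⊕ B) ⊕ C` with `P` the `(A ⊕ B)`-block. By the Schur complement
formula the `(A ⊕ B)`-block of `K⁻¹` is `P⁻¹ + (P⁻¹ Q) S⁻¹ (P⁻¹ Q)ᴴ`, where the Schur complement
`S = R - Qᴴ P⁻¹ Q` is positive semidefinite because `K` is. So this block exceeds `P⁻¹` by a
positive semidefinite matrix, and restricting to `A` preserves that.
-/

namespace Matrix

theorem IsHermitian.fromBlocks_toBlocks {m n α : Type*} [InvolutiveStar α]
    {N : Matrix (m ⊕ n) (m ⊕ n) α} (hN : N.IsHermitian) :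
    Matrix.fromBlocks N.toBlocks₁₁ N.toBlocks₁₂ N.toBlocks₁₂ᴴ N.toBlocks₂₂ = N := by
  have h21 : N.toBlocks₁₂ᴴ = N.toBlocks₂₁ :=
    (isHermitian_fromBlocks_iff.mp (by rwa [Matrix.fromBlocks_toBlocks])).2.1
  rw [h21, Matrix.fromBlocks_toBlocks]

variable {m n : Type*} [Fintype m] [Fintype n] [DecidableEq m] [DecidableEq n]

theorem toBlocks₁₁_inv_fromBlocks {α : Type*} [CommRing α] {A : Matrix m m α}
    (B : Matrix m n α) (C : Matrix n m α) (D : Matrix n n α) (hA : IsUnit A)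
    (hM : IsUnit (fromBlocks A B C D)) :
    (fromBlocks A B C D)⁻¹.toBlocks₁₁ = A⁻¹ + A⁻¹ * B * (D - C * A⁻¹ * B)⁻¹ * C * A⁻¹ := by
  let := hA.invertible
  let := hM.invertible
  let := invertibleOfFromBlocks₁₁Invertible A B C D
  rw [← invOf_eq_nonsing_inv, invOf_fromBlocks₁₁_eq, toBlocks_fromBlocks₁₁]
  simp only [invOf_eq_nonsing_inv]

variable {𝕜 : Type*} [Field 𝕜] [PartialOrder 𝕜] [StarRing 𝕜] [StarOrderedRing 𝕜]

theorem PosDef.posSemidef_toBlocks₁₁_inv_fromBlocks_sub_inv {P : Matrix m m 𝕜}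
    {Q : Matrix m n 𝕜} {R : Matrix n n 𝕜} (hN : (fromBlocks P Q Qᴴ R).PosDef) :
    ((fromBlocks P Q Qᴴ R)⁻¹.toBlocks₁₁ - P⁻¹).PosSemidef := by
  have hP : P.PosDef := hN.submatrix Sum.inl_injective
  let := hP.isUnit.invertible
  have hS : (R - Qᴴ * P⁻¹ * Q).PosSemidef := (PosDef.fromBlocks₁₁ Q R hP).mp hN.posSemidef
  have hconj : P⁻¹ * Q * (R - Qᴴ * P⁻¹ * Q)⁻¹ * Qᴴ * P⁻¹ =
      (P⁻¹ * Q) * (R - Qᴴ * P⁻¹ * Q)⁻¹ * (P⁻¹ * Q)ᴴ := by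
    rw [conjTranspose_mul, hP.inv.isHermitian.eq]
    simp only [Matrix.mul_assoc]
  rw [toBlocks₁₁_inv_fromBlocks Q Qᴴ R hP.isUnit hN.isUnit, add_sub_cancel_left, hconj]
  exact hS.inv.mul_mul_conjTranspose_same _

theorem PosDef.posSemidef_toBlocks₁₁_inv_sub_inv_toBlocks₁₁ {N : Matrix (m ⊕ n) (m ⊕ n) 𝕜}
    (hN : N.PosDef) : (N⁻¹.toBlocks₁₁ - N.toBlocks₁₁⁻¹).PosSemidef := by
  have hblocks := hN.isHermitian.fromBlocks_toBlocks
  rw [← hblocks] at hN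
  simpa only [hblocks] using hN.posSemidef_toBlocks₁₁_inv_fromBlocks_sub_inv

end Matrix

/-- Monotonicity of principal blocks of inverses: for a symmetric positive definite
matrix `K` indexed by `A ∪ B ∪ C`, the `A`-block of `K⁻¹` dominates, in the Loewner
order, the `A`-block of the inverse of the principal submatrix on `A ∪ B`. -/
theorem stmt11 {A B C : Type*} [Fintype A] [Fintype B] [Fintype C]
    [DecidableEq A] [DecidableEq B] [DecidableEq C]
    (K : Matrix ((A ⊕ B) ⊕ C) ((A ⊕ B) ⊕ C) ℝ) (hK : K.PosDef) :
    Matrix.PosSemidef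
      ((K⁻¹).submatrix (Sum.inl ∘ Sum.inl) (Sum.inl ∘ Sum.inl) -
        ((K.submatrix Sum.inl Sum.inl)⁻¹).submatrix Sum.inl Sum.inl) :=
  hK.posSemidef_toBlocks₁₁_inv_sub_inv_toBlocks₁₁.submatrix Sum.inl
end

section
/- Schur complement monotonicity: for a symmetric positive definite matrix K partitioned with blocks over index sets A, B, C, the Schur complement of A with respect to B∪C dominates the Schur complement of A with respect to C alone: K_{AA} − K_{A,B∪C}(K_{B∪C,B∪C})⁻¹K_{B∪C,A} ⪯ K_{AA} − K_{A,C}(K_{C,C})⁻¹K_{C,A}, and hence their inverses satisfy the reverse inequality. -/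
/-!
The Schur complement `S = M₁₁ - M₁₂ M₂₂⁻¹ M₂₁` of a positive definite block matrix `M` is the
minimum of its quadratic form over the second block: `x* S x ≤ (x, y)* M (x, y)` for every `y`,
with equality at `y = -M₂₂⁻¹ M₂₁ x`. Eliminating `B ∪ C` minimises over all `y = (u, z)`, while
eliminating `C` alone is the same minimisation restricted to `u = 0`, so the former complement is
the smaller one. Inversion reverses the Loewner order on positive definite matrices.
-/

open scoped ComplexOrder MatrixOrder

namespace Matrix

variable {𝕜 m n p : Type*} [RCLike 𝕜]

noncomputable def schurCompl₂₂ [Fintype n] [DecidableEq n] (M : Matrix (m ⊕ n) (m ⊕ n) 𝕜) :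
    Matrix m m 𝕜 :=
  M.toBlocks₁₁ - M.toBlocks₁₂ * M.toBlocks₂₂⁻¹ * M.toBlocks₂₁

lemma IsHermitian.conjTranspose_toBlocks₁₂ {M : Matrix (m ⊕ n) (m ⊕ n) 𝕜} (hM : M.IsHermitian) :
    M.toBlocks₁₂ᴴ = M.toBlocks₂₁ := by
  ext i j
  exact congrFun₂ hM (Sum.inr i) (Sum.inl j)

lemma PosDef.toBlocks₂₂ {M : Matrix (m ⊕ n) (m ⊕ n) 𝕜} (hM : M.PosDef) : M.toBlocks₂₂.PosDef :=
  hM.submatrix Sum.inr_injective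

lemma quadForm_submatrix_map_id_inr [Fintype m] [Fintype n] [Fintype p]
    (K : Matrix (m ⊕ (n ⊕ p)) (m ⊕ (n ⊕ p)) 𝕜) (x : m → 𝕜) (z : p → 𝕜) :
    star (x ⊕ᵥ z) ⬝ᵥ K.submatrix (Sum.map id Sum.inr) (Sum.map id Sum.inr) *ᵥ (x ⊕ᵥ z) =
      star (x ⊕ᵥ (0 ⊕ᵥ z)) ⬝ᵥ K *ᵥ (x ⊕ᵥ (0 ⊕ᵥ z)) := by
  simp [dotProduct, mulVec, Fintype.sum_sum_type]

section Fintype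

variable [Fintype m] [Fintype n] [DecidableEq n] {M : Matrix (m ⊕ n) (m ⊕ n) 𝕜}

lemma PosDef.quadForm_eq_schurCompl₂₂ (hM : M.PosDef) (x : m → 𝕜) (y : n → 𝕜) :
    star (x ⊕ᵥ y) ⬝ᵥ M *ᵥ (x ⊕ᵥ y) =
      star ((M.toBlocks₂₂⁻¹ * M.toBlocks₂₁) *ᵥ x + y) ⬝ᵥ
          M.toBlocks₂₂ *ᵥ ((M.toBlocks₂₂⁻¹ * M.toBlocks₂₁) *ᵥ x + y) +
        star x ⬝ᵥ M.schurCompl₂₂ *ᵥ x := by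
  have := hM.toBlocks₂₂.isUnit.invertible
  have h := schur_complement_eq₂₂ M.toBlocks₁₁ M.toBlocks₁₂ x y hM.toBlocks₂₂.isHermitian
  rw [hM.isHermitian.conjTranspose_toBlocks₁₂, fromBlocks_toBlocks] at h
  simpa only [dotProduct_mulVec, schurCompl₂₂] using h

lemma PosDef.quadForm_schurCompl₂₂_le (hM : M.PosDef) (x : m → 𝕜) (y : n → 𝕜) :
    star x ⬝ᵥ M.schurCompl₂₂ *ᵥ x ≤ star (x ⊕ᵥ y) ⬝ᵥ M *ᵥ (x ⊕ᵥ y) := by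
  rw [hM.quadForm_eq_schurCompl₂₂]
  exact le_add_of_nonneg_left (hM.toBlocks₂₂.posSemidef.dotProduct_mulVec_nonneg _)

lemma PosDef.quadForm_schurCompl₂₂_eq (hM : M.PosDef) (x : m → 𝕜) :
    star x ⬝ᵥ M.schurCompl₂₂ *ᵥ x =
      star (x ⊕ᵥ -((M.toBlocks₂₂⁻¹ * M.toBlocks₂₁) *ᵥ x)) ⬝ᵥ
        M *ᵥ (x ⊕ᵥ -((M.toBlocks₂₂⁻¹ * M.toBlocks₂₁) *ᵥ x)) := by
  simp [hM.quadForm_eq_schurCompl₂₂]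

lemma PosDef.schurCompl₂₂ (hM : M.PosDef) : M.schurCompl₂₂.PosDef := by
  have := hM.toBlocks₂₂.isUnit.invertible
  have hS : M.schurCompl₂₂.PosSemidef := by
    rw [Matrix.schurCompl₂₂, ← hM.isHermitian.conjTranspose_toBlocks₁₂,
      ← PosDef.fromBlocks₂₂ _ _ hM.toBlocks₂₂, hM.isHermitian.conjTranspose_toBlocks₁₂,
      fromBlocks_toBlocks]
    exact hM.posSemidef
  refine .of_dotProduct_mulVec_pos hS.isHermitian fun x hx => ?_
  rw [hM.quadForm_schurCompl₂₂_eq]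
  exact hM.dotProduct_mulVec_pos fun h => hx (by simpa using congrArg (· ∘ Sum.inl) h)

lemma PosDef.schurCompl₂₂_le_schurCompl₂₂_submatrix [Fintype p] [DecidableEq p]
    {K : Matrix (m ⊕ (n ⊕ p)) (m ⊕ (n ⊕ p)) 𝕜} (hK : K.PosDef) :
    K.schurCompl₂₂ ≤ (K.submatrix (Sum.map id Sum.inr) (Sum.map id Sum.inr)).schurCompl₂₂ := by
  set K' := K.submatrix (Sum.map id Sum.inr) (Sum.map id Sum.inr)
  have hK' : K'.PosDef :=
    hK.submatrix (Sum.map_injective.mpr ⟨Function.injective_id, Sum.inr_injective⟩)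
  refine .of_dotProduct_mulVec_nonneg
    (hK'.schurCompl₂₂.isHermitian.sub hK.schurCompl₂₂.isHermitian) fun x => ?_
  rw [sub_mulVec, dotProduct_sub, sub_nonneg, hK'.quadForm_schurCompl₂₂_eq,
    quadForm_submatrix_map_id_inr]
  exact hK.quadForm_schurCompl₂₂_le x _

end Fintype

/-- Both directions of the Schur-complement criterion, applied to `[N 1; 1 M⁻¹]`:
it is positive semidefinite iff `N - M` is, iff `M⁻¹ - N⁻¹` is. -/
lemma PosDef.inv_le_inv [Fintype m] [DecidableEq m] {M N : Matrix m m 𝕜} (hM : M.PosDef)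
    (hMN : M ≤ N) : N⁻¹ ≤ M⁻¹ := by
  have hN : N.PosDef := add_sub_cancel M N ▸ hM.add_posSemidef hMN
  have := hN.isUnit.invertible
  have := hM.isUnit.invertible
  have := hM.inv.isUnit.invertible
  have h : (fromBlocks N 1 1ᴴ M⁻¹).PosSemidef := by
    rw [PosDef.fromBlocks₂₂ _ _ hM.inv, inv_inv_of_invertible]
    simpa using le_iff.mp hMN
  simpa [le_iff] using (PosDef.fromBlocks₁₁ _ _ hN).mp h

end Matrix

/-- Schur complement monotonicity: for a symmetric positive definite `K` with blocks
over `A`, `B`, `C`, the Schur complement of `A` with respect to `B ∪ C` is dominated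
(in the Loewner order) by the Schur complement of `A` with respect to `C` alone, and
the inverses satisfy the reverse inequality. -/
theorem stmt12 {A B C : Type*} [Fintype A] [Fintype B] [Fintype C]
    [DecidableEq A] [DecidableEq B] [DecidableEq C]
    (K : Matrix (A ⊕ (B ⊕ C)) (A ⊕ (B ⊕ C)) ℝ) (hK : K.PosDef) :
    Matrix.PosSemidef
      ((K.submatrix Sum.inl Sum.inl -
          K.submatrix Sum.inl (Sum.inr ∘ Sum.inr) *
            (K.submatrix (Sum.inr ∘ Sum.inr) (Sum.inr ∘ Sum.inr))⁻¹ *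
              K.submatrix (Sum.inr ∘ Sum.inr) Sum.inl) -
        (K.submatrix Sum.inl Sum.inl -
          K.submatrix Sum.inl Sum.inr * (K.submatrix Sum.inr Sum.inr)⁻¹ *
            K.submatrix Sum.inr Sum.inl)) ∧
    Matrix.PosSemidef
      ((K.submatrix Sum.inl Sum.inl -
          K.submatrix Sum.inl Sum.inr * (K.submatrix Sum.inr Sum.inr)⁻¹ *
            K.submatrix Sum.inr Sum.inl)⁻¹ -
        (K.submatrix Sum.inl Sum.inl -
          K.submatrix Sum.inl (Sum.inr ∘ Sum.inr) *
            (K.submatrix (Sum.inr ∘ Sum.inr) (Sum.inr ∘ Sum.inr))⁻¹ *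
              K.submatrix (Sum.inr ∘ Sum.inr) Sum.inl)⁻¹) := by
  have hle := hK.schurCompl₂₂_le_schurCompl₂₂_submatrix
  exact ⟨Matrix.le_iff.mp hle, Matrix.le_iff.mp (hK.schurCompl₂₂.inv_le_inv hle)⟩
end
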